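/- arXiv:1511.05230 — 5 statements merged into one kernel-verified Lean document; each statement's English description precedes it below -/
import Mathlib

section
/- Let μ, C, S, c be real numbers with K := C² + S² − μ² > 0 and μ ≠ S. Define α : ℝ → ℝ by α(t) = 2·arctan( (C − √K · tanh(√K·(t + c)/2)) / (μ − S) ). Then α is differentiable on ℝ and for every t, α'(t) = μ + S·cos(α(t)) − C·sin(α(t)). -/
/-!
Under the Weierstrass substitution `α = 2 arctan x` the equation `α' = μ + S cos α - C sin α`
becomes the Riccati equation `2x' = μ(1 + x²) + S(1 - x²) - 2Cx`. Its right-hand side is the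
quadratic `(μ - S)x² - 2Cx + (μ + S)` of discriminant `4K`, and with `k = √K` the function
`x = (C - k tanh(k(t + c)/2)) / (μ - S)` solves it because `tanh' = 1 - tanh²`.
-/

open Real

theorem Real.hasDerivAt_tanh (x : ℝ) : HasDerivAt tanh (1 - tanh x ^ 2) x := by
  have hcosh : cosh x ≠ 0 := (cosh_pos x).ne'
  have h := (hasDerivAt_sinh x).div (hasDerivAt_cosh x) hcosh
  rw [show tanh = sinh / cosh from funext tanh_eq_sinh_div_cosh]
  refine h.congr_deriv ?_
  rw [Pi.div_apply]
  field_simp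

theorem Real.cos_two_mul_arctan (x : ℝ) : cos (2 * arctan x) = (1 - x ^ 2) / (1 + x ^ 2) := by
  rw [cos_two_mul, cos_sq_arctan]
  field_simp
  ring

theorem Real.sin_two_mul_arctan (x : ℝ) : sin (2 * arctan x) = 2 * x / (1 + x ^ 2) := by
  rw [sin_two_mul, ← tan_mul_cos (cos_arctan_pos x).ne', tan_arctan]
  linear_combination (2 * x) * cos_sq_arctan x

theorem HasDerivAt.two_mul_arctan_of_riccati {x : ℝ → ℝ} {x' t μ C S : ℝ}
    (hx : HasDerivAt x x' t)
    (hric : x' = (μ * (1 + x t ^ 2) + S * (1 - x t ^ 2) - 2 * C * x t) / 2) :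
    HasDerivAt (fun s => 2 * Real.arctan (x s))
      (μ + S * Real.cos (2 * Real.arctan (x t)) - C * Real.sin (2 * Real.arctan (x t))) t := by
  refine (hx.arctan.const_mul 2).congr_deriv ?_
  rw [cos_two_mul_arctan, sin_two_mul_arctan, hric]
  field_simp

theorem hasDerivAt_tanh_profile (a b k c t : ℝ) :
    HasDerivAt (fun s => (a - k * tanh (k * (s + c) / 2)) / b)
      (k ^ 2 * (tanh (k * (t + c) / 2) ^ 2 - 1) / (2 * b)) t := by
  have hinner : HasDerivAt (fun s => k * (s + c) / 2) (k / 2) t := by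
    simpa using (((hasDerivAt_id t).add_const c).const_mul k).div_const 2
  refine ((((hasDerivAt_tanh _).comp t hinner).const_mul k).const_sub a).div_const b
    |>.congr_deriv ?_
  field_simp
  ring

theorem tanh_profile_riccati {μ C S k : ℝ} (hμS : μ ≠ S) (hk : k ^ 2 = C ^ 2 + S ^ 2 - μ ^ 2)
    (T : ℝ) :
    let x := (C - k * T) / (μ - S)
    k ^ 2 * (T ^ 2 - 1) / (2 * (μ - S)) = (μ * (1 + x ^ 2) + S * (1 - x ^ 2) - 2 * C * x) / 2 := by
  have hμS' : μ - S ≠ 0 := sub_ne_zero.mpr hμS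
  intro x
  simp only [x]
  field_simp
  linear_combination (S - μ) * hk

/-- If K := C² + S² − μ² > 0 and μ ≠ S, then
α(t) = 2·arctan((C − √K·tanh(√K·(t+c)/2))/(μ − S)) is differentiable on ℝ and
satisfies α'(t) = μ + S·cos(α(t)) − C·sin(α(t)) for every t. -/
theorem tanh_solution_solves_ode (μ C S c : ℝ)
    (hK : 0 < C ^ 2 + S ^ 2 - μ ^ 2) (hμS : μ ≠ S)
    (α : ℝ → ℝ)
    (hα : ∀ t, α t = 2 * Real.arctan
      ((C - Real.sqrt (C ^ 2 + S ^ 2 - μ ^ 2) *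
        Real.tanh (Real.sqrt (C ^ 2 + S ^ 2 - μ ^ 2) * (t + c) / 2)) / (μ - S))) :
    Differentiable ℝ α ∧
      ∀ t, deriv α t = μ + S * Real.cos (α t) - C * Real.sin (α t) := by
  set k := √(C ^ 2 + S ^ 2 - μ ^ 2)
  have hk : k ^ 2 = C ^ 2 + S ^ 2 - μ ^ 2 := sq_sqrt hK.le
  have hderiv : ∀ t, HasDerivAt α (μ + S * cos (α t) - C * sin (α t)) t := by
    intro t
    rw [funext hα]
    exact HasDerivAt.two_mul_arctan_of_riccati (hasDerivAt_tanh_profile C (μ - S) k c t)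
      (tanh_profile_riccati hμS hk _)
  exact ⟨fun t => (hderiv t).differentiableAt, fun t => (hderiv t).deriv⟩
end

section
/- Let 𝓑 be a symmetric N×N real matrix, 𝓡 a symmetric M×M real matrix, M_cross an N×M real matrix with total cross degree d_T := Σᵢⱼ (M_cross)ᵢⱼ, and suppose β, ρ solve the two-network frustrated Kuramoto system and in addition all Blue phases coincide, βᵢ(t) = B(t) for all i, and all Red phases coincide, ρⱼ(t) = P(t) for all j. Then α(t) := B(t) − P(t) satisfies exactly α'(t) = ω̄ − ν̄ + S(φ,ψ)·cos α(t) − C(φ,ψ)·sin α(t), where C(φ,ψ) = (d_T·ζ_BR·cos φ)/N + (d_T·ζ_RB·cos ψ)/M and S(φ,ψ) = (d_T·ζ_BR·sin φ)/N − (d_T·ζ_RB·sin ψ)/M. -/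
/-!
While each population stays locked, every internal coupling term is `sin 0 = 0` and every cross
term of oscillator `i` collapses to its cross degree times one common sine. All members of a
population share the derivative of its centroid, so averaging the equations over the population
gives `B'` and `P'` in terms of the total cross degree `d_T`; subtracting them and expanding
`sin (φ - α)` and `sin (ψ + α)` yields the equation for `α = B - P`.
-/

open Finset

theorem deriv_eq_sum_deriv_div_card_of_forall_eq {ι : Type*} [Fintype ι] [Nonempty ι]
    (x : ℝ → ι → ℝ) (X : ℝ → ℝ) (hx : ∀ t i, x t i = X t) (t : ℝ) :
    deriv X t = (∑ i, deriv (fun s => x s i) t) / Fintype.card ι := by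
  have hcomp : ∀ i, (fun s => x s i) = X := fun i => funext fun s => hx s i
  simp only [hcomp, sum_const, card_univ, nsmul_eq_mul]
  field_simp

theorem frustrated_kuramoto_field_of_locked {ι κ : Type*} [Fintype ι] [Fintype κ]
    (ω : ι → ℝ) (σ ζ φ X Y : ℝ) (A : ι → ι → ℝ) (C : ι → κ → ℝ) (x : ι → ℝ) (y : κ → ℝ)
    (hx : ∀ i, x i = X) (hy : ∀ j, y j = Y) (i : ι) :
    ω i + σ * ∑ j, A i j * Real.sin (x j - x i) + ζ * ∑ j, C i j * Real.sin (y j + φ - x i)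
      = ω i + ζ * (∑ j, C i j) * Real.sin (Y + φ - X) := by
  simp only [hx, hy, sub_self, Real.sin_zero, mul_zero, sum_const_zero, add_zero, ← sum_mul,
    mul_assoc]

theorem locked_centroid_difference_ode_general (N M : ℕ) (hN : 0 < N) (hM : 0 < M)
    (Bm : Matrix (Fin N) (Fin N) ℝ)
    (Rm : Matrix (Fin M) (Fin M) ℝ)
    (Mc : Matrix (Fin N) (Fin M) ℝ)
    (ω : Fin N → ℝ) (ν : Fin M → ℝ) (σB σR ζBR ζRB φ ψ : ℝ)
    (β : ℝ → Fin N → ℝ) (ρ : ℝ → Fin M → ℝ) (B P : ℝ → ℝ)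
    (hβd : ∀ i, Differentiable ℝ (fun t => β t i))
    (hρd : ∀ i, Differentiable ℝ (fun t => ρ t i))
    (hβ : ∀ i t, deriv (fun s => β s i) t =
      ω i + σB * ∑ j, Bm i j * Real.sin (β t j - β t i)
        + ζBR * ∑ j, Mc i j * Real.sin (ρ t j + φ - β t i))
    (hρ : ∀ i t, deriv (fun s => ρ s i) t =
      ν i + σR * ∑ j, Rm i j * Real.sin (ρ t j - ρ t i)
        + ζRB * ∑ j, Mc j i * Real.sin (β t j + ψ - ρ t i))
    (hBc : ∀ t i, β t i = B t)
    (hPc : ∀ t j, ρ t j = P t) :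
    ∀ t, deriv (fun s => B s - P s) t =
      ((1 / (N : ℝ)) * ∑ i, ω i - (1 / (M : ℝ)) * ∑ i, ν i)
        + ((∑ i, ∑ j, Mc i j) * ζBR * Real.sin φ / (N : ℝ)
            - (∑ i, ∑ j, Mc i j) * ζRB * Real.sin ψ / (M : ℝ)) * Real.cos (B t - P t)
        - ((∑ i, ∑ j, Mc i j) * ζBR * Real.cos φ / (N : ℝ)
            + (∑ i, ∑ j, Mc i j) * ζRB * Real.cos ψ / (M : ℝ)) * Real.sin (B t - P t) := by
  intro t
  have : Nonempty (Fin N) := ⟨⟨0, hN⟩⟩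
  have : Nonempty (Fin M) := ⟨⟨0, hM⟩⟩
  have hBd : Differentiable ℝ B := by simpa only [hBc] using hβd ⟨0, hN⟩
  have hPd : Differentiable ℝ P := by simpa only [hPc] using hρd ⟨0, hM⟩
  have hB : deriv B t = (∑ i, ω i + ζBR * (∑ i, ∑ j, Mc i j) * Real.sin (P t + φ - B t)) / N := by
    simp only [deriv_eq_sum_deriv_div_card_of_forall_eq β B hBc t, hβ, Fintype.card_fin,
      frustrated_kuramoto_field_of_locked ω σB ζBR φ (B t) (P t) Bm Mc _ _ (hBc t) (hPc t),
      sum_add_distrib, ← sum_mul, ← mul_sum]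
  have hP : deriv P t = (∑ i, ν i + ζRB * (∑ i, ∑ j, Mc i j) * Real.sin (B t + ψ - P t)) / M := by
    simp only [deriv_eq_sum_deriv_div_card_of_forall_eq ρ P hPc t, hρ, Fintype.card_fin,
      frustrated_kuramoto_field_of_locked ν σR ζRB ψ (P t) (B t) Rm (fun i j => Mc j i) _ _ (hPc t)
        (hBc t), sum_add_distrib, ← sum_mul, ← mul_sum]
    rw [sum_comm (s := univ) (t := univ) (f := fun i j => Mc j i)]
  rw [deriv_fun_sub (hBd t) (hPd t), hB, hP,
    show P t + φ - B t = φ - (B t - P t) by ring, show B t + ψ - P t = ψ + (B t - P t) by ring,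
    Real.sin_sub, Real.sin_add]
  ring

/-- If β, ρ solve the two-network frustrated Kuramoto system on
symmetric networks 𝓑 and 𝓡, and all Blue phases coincide (βᵢ(t) = B(t)) and all
Red phases coincide (ρⱼ(t) = P(t)), then α(t) = B(t) − P(t) satisfies exactly
α'(t) = ω̄ − ν̄ + S(φ,ψ)·cos α(t) − C(φ,ψ)·sin α(t), where
C(φ,ψ) = d_T·ζ_BR·cos φ/N + d_T·ζ_RB·cos ψ/M and
S(φ,ψ) = d_T·ζ_BR·sin φ/N − d_T·ζ_RB·sin ψ/M, with d_T = Σᵢⱼ (M_cross)ᵢⱼ. -/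
theorem locked_centroid_difference_ode (N M : ℕ) (hN : 0 < N) (hM : 0 < M)
    (Bm : Matrix (Fin N) (Fin N) ℝ) (hBm : Bm.IsSymm)
    (Rm : Matrix (Fin M) (Fin M) ℝ) (hRm : Rm.IsSymm)
    (Mc : Matrix (Fin N) (Fin M) ℝ)
    (ω : Fin N → ℝ) (ν : Fin M → ℝ) (σB σR ζBR ζRB φ ψ : ℝ)
    (β : ℝ → Fin N → ℝ) (ρ : ℝ → Fin M → ℝ) (B P : ℝ → ℝ)
    (hβd : ∀ i, Differentiable ℝ (fun t => β t i))
    (hρd : ∀ i, Differentiable ℝ (fun t => ρ t i))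
    (hβ : ∀ i t, deriv (fun s => β s i) t =
      ω i + σB * ∑ j, Bm i j * Real.sin (β t j - β t i)
        + ζBR * ∑ j, Mc i j * Real.sin (ρ t j + φ - β t i))
    (hρ : ∀ i t, deriv (fun s => ρ s i) t =
      ν i + σR * ∑ j, Rm i j * Real.sin (ρ t j - ρ t i)
        + ζRB * ∑ j, Mc j i * Real.sin (β t j + ψ - ρ t i))
    (hBc : ∀ t i, β t i = B t)
    (hPc : ∀ t j, ρ t j = P t) :
    ∀ t, deriv (fun s => B s - P s) t =
      ((1 / (N : ℝ)) * ∑ i, ω i - (1 / (M : ℝ)) * ∑ i, ν i)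
        + ((∑ i, ∑ j, Mc i j) * ζBR * Real.sin φ / (N : ℝ)
            - (∑ i, ∑ j, Mc i j) * ζRB * Real.sin ψ / (M : ℝ)) * Real.cos (B t - P t)
        - ((∑ i, ∑ j, Mc i j) * ζBR * Real.cos φ / (N : ℝ)
            + (∑ i, ∑ j, Mc i j) * ζRB * Real.cos ψ / (M : ℝ)) * Real.sin (B t - P t) :=
  locked_centroid_difference_ode_general N M hN hM Bm Rm Mc ω ν σB σR ζBR ζRB φ ψ β ρ B P hβd hρd hβ
    hρ hBc hPc
end

section
/- Let ℒ be the two-population super-Laplacian built from real matrices 𝓑 (N×N), 𝓡 (M×M), A_BR (N×M), A_RB (M×N) and real parameters σ_B, σ_R, ζ_BR, ζ_RB, φ, ψ, α. Suppose ℒ is positive semidefinite as a quadratic form, i.e. vᵀ·ℒ·v ≥ 0 for every v ∈ ℝ^(N+M). If ζ_BR > 0 and d_T^(BR) := Σᵢⱼ (A_BR)ᵢⱼ > 0, then cos(φ − α) ≥ 0; if ζ_RB > 0 and d_T^(RB) := Σᵢⱼ (A_RB)ᵢⱼ > 0, then cos(ψ + α) ≥ 0. -/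
open Matrix

/-- Graph Laplacian of a square real matrix: diagonal of row sums minus the matrix. -/
noncomputable def graphLaplacian {n : ℕ} (A : Matrix (Fin n) (Fin n) ℝ) :
    Matrix (Fin n) (Fin n) ℝ :=
  Matrix.diagonal (fun i => ∑ j, A i j) - A

/-- Diagonal matrix of row sums (cross-degree matrix) of a rectangular real matrix. -/
noncomputable def rowDegMatrix {n m : ℕ} (A : Matrix (Fin n) (Fin m) ℝ) :
    Matrix (Fin n) (Fin n) ℝ :=
  Matrix.diagonal (fun i => ∑ j, A i j)

/-- The two-population super-Laplacian ℒ. -/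
noncomputable def superLaplacian (N M : ℕ)
    (B : Matrix (Fin N) (Fin N) ℝ) (R : Matrix (Fin M) (Fin M) ℝ)
    (ABR : Matrix (Fin N) (Fin M) ℝ) (ARB : Matrix (Fin M) (Fin N) ℝ)
    (σB σR ζBR ζRB φ ψ α : ℝ) :
    Matrix (Fin N ⊕ Fin M) (Fin N ⊕ Fin M) ℝ :=
  Matrix.fromBlocks
    (σB • graphLaplacian B + (ζBR * Real.cos (φ - α)) • rowDegMatrix ABR)
    ((-(ζBR * Real.cos (φ - α))) • ABR)
    ((-(ζRB * Real.cos (ψ + α))) • ARB)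
    (σR • graphLaplacian R + (ζRB * Real.cos (ψ + α)) • rowDegMatrix ARB)


/-- If the super-Laplacian ℒ is positive semidefinite as a quadratic
form, then ζ_BR > 0 and d_T^(BR) > 0 imply cos(φ − α) ≥ 0, and ζ_RB > 0 and
d_T^(RB) > 0 imply cos(ψ + α) ≥ 0. -/
theorem psd_superLaplacian_stability_conditions (N M : ℕ)
    (B : Matrix (Fin N) (Fin N) ℝ) (R : Matrix (Fin M) (Fin M) ℝ)
    (ABR : Matrix (Fin N) (Fin M) ℝ) (ARB : Matrix (Fin M) (Fin N) ℝ)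
    (σB σR ζBR ζRB φ ψ α : ℝ)
    (hPSD : ∀ v : (Fin N ⊕ Fin M) → ℝ,
      0 ≤ v ⬝ᵥ ((superLaplacian N M B R ABR ARB σB σR ζBR ζRB φ ψ α) *ᵥ v)) :
    (0 < ζBR → 0 < ∑ i, ∑ j, ABR i j → 0 ≤ Real.cos (φ - α)) ∧
    (0 < ζRB → 0 < ∑ i, ∑ j, ARB i j → 0 ≤ Real.cos (ψ + α)) := by
  constructor
  · intro hz hd
    have h := hPSD (Sum.elim (fun _ => (1:ℝ)) 0)
    have heq : (Sum.elim (fun _ => (1:ℝ)) 0 : Fin N ⊕ Fin M → ℝ) ⬝ᵥ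
        ((superLaplacian N M B R ABR ARB σB σR ζBR ζRB φ ψ α) *ᵥ
          (Sum.elim (fun _ => (1:ℝ)) 0))
        = (ζBR * Real.cos (φ - α)) * ∑ i, ∑ j, ABR i j := by
      simp [superLaplacian, graphLaplacian, rowDegMatrix, Matrix.fromBlocks_mulVec,
        mulVec, dotProduct, Fintype.sum_sum_type, Matrix.sub_apply,
        Matrix.diagonal_apply, Finset.mul_sum, Finset.sum_sub_distrib, mul_comm,
        Finset.sum_add_distrib, Finset.sum_ite_eq, mul_sub]
    rw [heq] at h
    nlinarith [mul_pos hz hd, mul_pos (mul_pos hz hd) hz]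
  · intro hz hd
    have h := hPSD (Sum.elim 0 (fun _ => (1:ℝ)))
    have heq : (Sum.elim 0 (fun _ => (1:ℝ)) : Fin N ⊕ Fin M → ℝ) ⬝ᵥ
        ((superLaplacian N M B R ABR ARB σB σR ζBR ζRB φ ψ α) *ᵥ
          (Sum.elim 0 (fun _ => (1:ℝ))))
        = (ζRB * Real.cos (ψ + α)) * ∑ i, ∑ j, ARB i j := by
      simp [superLaplacian, graphLaplacian, rowDegMatrix, Matrix.fromBlocks_mulVec,
        mulVec, dotProduct, Fintype.sum_sum_type, Matrix.sub_apply,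
        Matrix.diagonal_apply, Finset.mul_sum, Finset.sum_sub_distrib, mul_comm,
        Finset.sum_add_distrib, Finset.sum_ite_eq, mul_sub]
    rw [heq] at h
    nlinarith [mul_pos hz hd, mul_pos (mul_pos hz hd) hz]
end

section
/- Consider the three-cluster super-Laplacian ℒ' built from real matrices 𝓑 (N×N), 𝓡₁ (M₁×M₁), 𝓡₂ (M₂×M₂), cross blocks A^(BR₁) (N×M₁), A^(R₁B) (M₁×N), A^(R₁R₂) (M₁×M₂), A^(R₂R₁) (M₂×M₁), with the Blue–R₂ blocks zero (A^(BR₂) = 0 and A^(R₂B) = 0), and real parameters σ_B, σ_R, ζ_BR, ζ_RB, φ, ψ, α_BR₁, α_R₁R₂. Suppose ℒ' is positive semidefinite as a quadratic form on ℝ^(N+M₁+M₂). Then: (i) if ζ_BR > 0 and d_T^(BR₁) := Σᵢⱼ (A^(BR₁))ᵢⱼ > 0, then cos(φ − α_BR₁) ≥ 0; (ii) if σ_R > 0 and d_T^(R₂R₁) := Σᵢⱼ (A^(R₂R₁))ᵢⱼ > 0, then cos(α_R₁R₂) ≥ 0; (iii) ζ_RB·cos(ψ + α_BR₁)·d_T^(R₁B)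 + σ_R·cos(α_R₁R₂)·d_T^(R₁R₂) ≥ 0, where d_T^(R₁B) := Σᵢⱼ (A^(R₁B))ᵢⱼ and d_T^(R₁R₂) := Σᵢⱼ (A^(R₁R₂))ᵢⱼ. -/
open Matrix

/-- The three-cluster super-Laplacian ℒ' of the Red-fragmentation scenario, with
clusters Blue, R₁, R₂, angles α₁ = α_BR₁, γ = α_R₁R₂ and α_BR₂ = α₁ + γ. -/
noncomputable def superLaplacian3 (N M₁ M₂ : ℕ)
    (B : Matrix (Fin N) (Fin N) ℝ)
    (R1 : Matrix (Fin M₁) (Fin M₁) ℝ) (R2 : Matrix (Fin M₂) (Fin M₂) ℝ)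
    (ABR1 : Matrix (Fin N) (Fin M₁) ℝ) (ABR2 : Matrix (Fin N) (Fin M₂) ℝ)
    (AR1B : Matrix (Fin M₁) (Fin N) ℝ) (AR2B : Matrix (Fin M₂) (Fin N) ℝ)
    (AR1R2 : Matrix (Fin M₁) (Fin M₂) ℝ) (AR2R1 : Matrix (Fin M₂) (Fin M₁) ℝ)
    (σB σR ζBR ζRB φ ψ α₁ γ : ℝ) :
    Matrix (Fin N ⊕ (Fin M₁ ⊕ Fin M₂)) (Fin N ⊕ (Fin M₁ ⊕ Fin M₂)) ℝ :=
  fun x y =>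
    match x, y with
    | Sum.inl i, Sum.inl j =>
        (σB • graphLaplacian B + (ζBR * Real.cos (φ - α₁)) • rowDegMatrix ABR1
          + (ζBR * Real.cos (φ - (α₁ + γ))) • rowDegMatrix ABR2) i j
    | Sum.inl i, Sum.inr (Sum.inl j) => -(ζBR * Real.cos (φ - α₁)) * ABR1 i j
    | Sum.inl i, Sum.inr (Sum.inr j) => -(ζBR * Real.cos (φ - (α₁ + γ))) * ABR2 i j
    | Sum.inr (Sum.inl i), Sum.inl j => -(ζRB * Real.cos (ψ + α₁)) * AR1B i j
    | Sum.inr (Sum.inl i), Sum.inr (Sum.inl j) =>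
        (σR • graphLaplacian R1 + (ζRB * Real.cos (ψ + α₁)) • rowDegMatrix AR1B
          + (σR * Real.cos γ) • rowDegMatrix AR1R2) i j
    | Sum.inr (Sum.inl i), Sum.inr (Sum.inr j) => -(σR * Real.cos γ) * AR1R2 i j
    | Sum.inr (Sum.inr i), Sum.inl j => -(ζRB * Real.cos (ψ + (α₁ + γ))) * AR2B i j
    | Sum.inr (Sum.inr i), Sum.inr (Sum.inl j) => -(σR * Real.cos γ) * AR2R1 i j
    | Sum.inr (Sum.inr i), Sum.inr (Sum.inr j) =>
        (σR • graphLaplacian R2 + (ζRB * Real.cos (ψ + (α₁ + γ))) • rowDegMatrix AR2B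
          + (σR * Real.cos γ) • rowDegMatrix AR2R1) i j

/-- If the Blue–R₂ blocks vanish and ℒ' is positive semidefinite as a
quadratic form on ℝ^(N+M₁+M₂), then (i) ζ_BR > 0 and d_T^(BR₁) > 0 imply
cos(φ − α_BR₁) ≥ 0; (ii) σ_R > 0 and d_T^(R₂R₁) > 0 imply cos(α_R₁R₂) ≥ 0; and
(iii) ζ_RB·cos(ψ + α_BR₁)·d_T^(R₁B) + σ_R·cos(α_R₁R₂)·d_T^(R₁R₂) ≥ 0. -/
theorem psd_superLaplacian3_stability_conditions (N M₁ M₂ : ℕ)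
    (B : Matrix (Fin N) (Fin N) ℝ)
    (R1 : Matrix (Fin M₁) (Fin M₁) ℝ) (R2 : Matrix (Fin M₂) (Fin M₂) ℝ)
    (ABR1 : Matrix (Fin N) (Fin M₁) ℝ) (ABR2 : Matrix (Fin N) (Fin M₂) ℝ)
    (AR1B : Matrix (Fin M₁) (Fin N) ℝ) (AR2B : Matrix (Fin M₂) (Fin N) ℝ)
    (AR1R2 : Matrix (Fin M₁) (Fin M₂) ℝ) (AR2R1 : Matrix (Fin M₂) (Fin M₁) ℝ)
    (σB σR ζBR ζRB φ ψ α₁ γ : ℝ)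
    (hABR2 : ABR2 = 0) (hAR2B : AR2B = 0)
    (hPSD : ∀ v : (Fin N ⊕ (Fin M₁ ⊕ Fin M₂)) → ℝ,
      0 ≤ v ⬝ᵥ ((superLaplacian3 N M₁ M₂ B R1 R2 ABR1 ABR2 AR1B AR2B AR1R2 AR2R1
        σB σR ζBR ζRB φ ψ α₁ γ) *ᵥ v)) :
    (0 < ζBR → 0 < ∑ i, ∑ j, ABR1 i j → 0 ≤ Real.cos (φ - α₁)) ∧
    (0 < σR → 0 < ∑ i, ∑ j, AR2R1 i j → 0 ≤ Real.cos γ) ∧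
    0 ≤ ζRB * Real.cos (ψ + α₁) * (∑ i, ∑ j, AR1B i j)
        + σR * Real.cos γ * (∑ i, ∑ j, AR1R2 i j) := by

  subst hABR2; subst hAR2B
  have h1 := hPSD (Sum.elim (fun _ => (1:ℝ)) (fun _ => 0))
  have h2 := hPSD (Sum.elim (fun _ => 0) (Sum.elim (fun _ => (1:ℝ)) (fun _ => 0)))
  have h3 := hPSD (Sum.elim (fun _ => 0) (Sum.elim (fun _ => 0) (fun _ => (1:ℝ))))
  simp [superLaplacian3, graphLaplacian, rowDegMatrix, dotProduct, mulVec,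
    Fintype.sum_sum_type, Matrix.diagonal_apply, Matrix.sub_apply, Matrix.add_apply,
    Matrix.smul_apply, smul_eq_mul, Finset.sum_ite_eq, mul_sub] at h1 h2 h3
  simp only [Finset.sum_add_distrib, Finset.sum_sub_distrib, Finset.sum_ite_eq, Finset.mem_univ, if_true, Finset.mul_sum] at h1 h2 h3
  simp only [sub_self, zero_add, ← Finset.mul_sum] at h1 h2 h3
  refine ⟨fun hζ hd => ?_, fun hσ hd => ?_, by linarith⟩
  · nlinarith [mul_pos hζ hd]
  · nlinarith [mul_pos hσ hd]
end

section
/- Let χ₁, χ₂, C₁, S₁, C₂, S₂ be real numbers with C₁² + S₁² > 0, and suppose the real numbers α and γ satisfy the steady-state system χ₁ = C₁·sin α − S₁·cos α and sin γ = χ₂ + C₂·sin α − S₂·cos α. Then J := C₁² + S₁² − χ₁² ≥ 0 and there exists ε ∈ {−1, +1} such that sin α = (χ₁·C₁ + ε·S₁·√J)/(C₁² + S₁²) and sin γ = χ₂ + (χ₁·(C₁·C₂ + S₁·S₂) + ε·(S₁·C₂ − C₁·S₂)·√J)/(C₁² + S₁²). -/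
/-- If C₁² + S₁² > 0 and the steady-state system
χ₁ = C₁·sin α − S₁·cos α, sin γ = χ₂ + C₂·sin α − S₂·cos α holds, then
J := C₁² + S₁² − χ₁² ≥ 0 and there is a sign ε ∈ {−1,+1} with
sin α = (χ₁C₁ + εS₁√J)/(C₁²+S₁²) and
sin γ = χ₂ + (χ₁(C₁C₂+S₁S₂) + ε(S₁C₂−C₁S₂)√J)/(C₁²+S₁²). -/
theorem three_cluster_steady_state_solution (χ₁ χ₂ C₁ S₁ C₂ S₂ α γ : ℝ)
    (hCS : 0 < C₁ ^ 2 + S₁ ^ 2)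
    (h1 : χ₁ = C₁ * Real.sin α - S₁ * Real.cos α)
    (h2 : Real.sin γ = χ₂ + C₂ * Real.sin α - S₂ * Real.cos α) :
    0 ≤ C₁ ^ 2 + S₁ ^ 2 - χ₁ ^ 2 ∧
    ∃ ε : ℝ, (ε = -1 ∨ ε = 1) ∧
      Real.sin α =
        (χ₁ * C₁ + ε * S₁ * Real.sqrt (C₁ ^ 2 + S₁ ^ 2 - χ₁ ^ 2)) / (C₁ ^ 2 + S₁ ^ 2) ∧
      Real.sin γ = χ₂ +
        (χ₁ * (C₁ * C₂ + S₁ * S₂)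
          + ε * (S₁ * C₂ - C₁ * S₂) * Real.sqrt (C₁ ^ 2 + S₁ ^ 2 - χ₁ ^ 2)) /
          (C₁ ^ 2 + S₁ ^ 2) := by
  have hsc := Real.sin_sq_add_cos_sq α
  set s := Real.sin α
  set c := Real.cos α
  set t := S₁ * s + C₁ * c with ht
  have hJ : C₁ ^ 2 + S₁ ^ 2 - χ₁ ^ 2 = t ^ 2 := by
    rw [h1, ht]; nlinarith [hsc]
  have hsqrt : Real.sqrt (C₁ ^ 2 + S₁ ^ 2 - χ₁ ^ 2) = |t| := by
    rw [hJ, Real.sqrt_sq_eq_abs]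
  refine ⟨by rw [hJ]; positivity, ?_⟩
  refine ⟨if 0 ≤ t then 1 else -1, by split <;> simp, ?_, ?_⟩ <;>
    rw [hsqrt] <;>
    [skip; rw [h2]] <;>
    · rcases le_or_gt 0 t with h | h
      · rw [if_pos h, abs_of_nonneg h]
        field_simp
        rw [h1]; ring
      · rw [if_neg (not_le.mpr h), abs_of_neg h]
        field_simp
        rw [h1]; ring
end
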